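/- arXiv:1311.2240 — 10 statements merged into one kernel-verified Lean document; each statement's English description precedes it below -/
import Mathlib

section
/- Let F : ℝ³ → ℝ and φ, ψ : ℝ² → ℝ satisfy φ(y, F(x,y,z)) = ψ(x,z) for all x,y,z ∈ ℝ, and let Ω, Υ : ℝ² → ℝ be a left inverse of (φ, ψ). If u is a solution of the quad-graph equation and v : ℤ × ℤ → ℝ is defined by v(i,j) := φ(u(i,j), u(i,j+1)), then for all i,j ∈ ℤ: (a) v(i+1,j) = ψ(u(i,j), u(i,j+1)); (b) u(i,j) = Ω(v(i,j), v(i+1,j)) and u(i,j+1) = Υ(v(i,j), v(i+1,j)); (c) v is a solution of the transformed equation (pqd), i.e. Ω(v(i,j+1), v(i+1,j+1)) = Υ(v(i,j), v(i+1,j)). -/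
/-!
By (invt), the pair `(v(i,j), v(i+1,j))` is the image of `(u(i,j), u(i,j+1))` under `(φ, ψ)`,
so the left inverse `(Ω, Υ)` reads `u(i,j)` and `u(i,j+1)` back off it. Then (pqd) is the
statement that `u(i,j+1)`, read off the column at `j+1` by `Ω` and off the column at `j` by `Υ`,
is the same value.
-/

section

variable {α β : Type*} {φ ψ : α → α → β} {Ω Υ : β → β → α}

theorem shift_eq_of_invt {F : α → α → α → α} (hinvt : ∀ x y z, φ y (F x y z) = ψ x z)
    {u : ℤ → ℤ → α} (hu : ∀ i j, u (i+1) (j+1) = F (u i j) (u (i+1) j) (u i (j+1)))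
    {v : ℤ → ℤ → β} (hv : ∀ i j, v i j = φ (u i j) (u i (j+1))) (i j : ℤ) :
    v (i+1) j = ψ (u i j) (u i (j+1)) := by
  rw [hv, hu, hinvt]

theorem leftInverse_fst (hΩ : ∀ w z, Ω (φ w z) (ψ w z) = w) {a b : α} {p q : β}
    (hp : p = φ a b) (hq : q = ψ a b) : Ω p q = a := by
  rw [hp, hq, hΩ]

theorem leftInverse_snd (hΥ : ∀ w z, Υ (φ w z) (ψ w z) = z) {a b : α} {p q : β}
    (hp : p = φ a b) (hq : q = ψ a b) : Υ p q = b := by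
  rw [hp, hq, hΥ]

end

/-- The non-point transformation `v(i,j) = φ(u(i,j), u(i,j+1))` maps
solutions of the quad-graph equation of form (invt) into solutions of the
transformed equation (pqd), with the stated intermediate identities. -/
theorem transformation_maps_solutions
    (F : ℝ → ℝ → ℝ → ℝ) (φ ψ Ω Υ : ℝ → ℝ → ℝ)
    (hinvt : ∀ x y z : ℝ, φ y (F x y z) = ψ x z)
    (hΩ : ∀ w z : ℝ, Ω (φ w z) (ψ w z) = w)
    (hΥ : ∀ w z : ℝ, Υ (φ w z) (ψ w z) = z)
    (u : ℤ → ℤ → ℝ)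
    (hu : ∀ i j : ℤ, u (i+1) (j+1) = F (u i j) (u (i+1) j) (u i (j+1)))
    (v : ℤ → ℤ → ℝ)
    (hv : ∀ i j : ℤ, v i j = φ (u i j) (u i (j+1))) :
    ∀ i j : ℤ,
      v (i+1) j = ψ (u i j) (u i (j+1)) ∧
      u i j = Ω (v i j) (v (i+1) j) ∧
      u i (j+1) = Υ (v i j) (v (i+1) j) ∧
      Ω (v i (j+1)) (v (i+1) (j+1)) = Υ (v i j) (v (i+1) j) := by
  have hshift := shift_eq_of_invt hinvt hu hv
  have hfst : ∀ i j, Ω (v i j) (v (i+1) j) = u i j := fun i j =>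
    leftInverse_fst hΩ (hv i j) (hshift i j)
  have hsnd : ∀ i j, Υ (v i j) (v (i+1) j) = u i (j+1) := fun i j =>
    leftInverse_snd hΥ (hv i j) (hshift i j)
  intro i j
  exact ⟨hshift i j, (hfst i j).symm, (hsnd i j).symm, by rw [hfst, hsnd]⟩
end

section
/- Let F : ℝ³ → ℝ and φ, ψ : ℝ² → ℝ satisfy φ(y, F(x,y,z)) = ψ(x,z) for all x,y,z ∈ ℝ; let Ω, Υ : ℝ² → ℝ be a two-sided inverse of (φ, ψ), and suppose that for every y ∈ ℝ the map z ↦ φ(y,z) is injective. If V : ℤ × ℤ → ℝ is a solution of the transformed equation (pqd), then the function u : ℤ × ℤ → ℝ defined by u(i,j) := Ω(V(i,j), V(i+1,j)) is a solution of the quad-graph equation u(i+1,j+1) = F(u(i,j), u(i+1,j), u(i,j+1)), and moreover V(i,j) = φ(u(i,j), u(i,j+1)) and V(i+1,j) = ψ(u(i,j), u(i,j+1)) for all i,j ∈ ℤ. -/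
section QuadGraph

variable {α : Type*}

theorem eq_of_apply_eq_of_invt {F : α → α → α → α} {φ ψ : α → α → α}
    (hinvt : ∀ x y z, φ y (F x y z) = ψ x z) {x y z w : α}
    (hinj : Function.Injective (φ y)) (h : φ y w = ψ x z) : w = F x y z :=
  hinj (h.trans (hinvt x y z).symm)

variable {φ ψ Ω Υ : α → α → α} {V u : ℤ → ℤ → α}

theorem shift_eq_of_pqd
    (hV : ∀ i j, Ω (V i (j+1)) (V (i+1) (j+1)) = Υ (V i j) (V (i+1) j))
    (hu : ∀ i j, u i j = Ω (V i j) (V (i+1) j)) (i j : ℤ) :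
    u i (j+1) = Υ (V i j) (V (i+1) j) := by
  rw [hu, hV]

theorem eq_phi_psi_of_pqd
    (hφ : ∀ a b, φ (Ω a b) (Υ a b) = a) (hψ : ∀ a b, ψ (Ω a b) (Υ a b) = b)
    (hV : ∀ i j, Ω (V i (j+1)) (V (i+1) (j+1)) = Υ (V i j) (V (i+1) j))
    (hu : ∀ i j, u i j = Ω (V i j) (V (i+1) j)) (i j : ℤ) :
    V i j = φ (u i j) (u i (j+1)) ∧ V (i+1) j = ψ (u i j) (u i (j+1)) := by
  rw [hu, shift_eq_of_pqd hV hu]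
  exact ⟨(hφ _ _).symm, (hψ _ _).symm⟩

end QuadGraph

theorem inverse_transformation_maps_solutions_general
    (F : ℝ → ℝ → ℝ → ℝ) (φ ψ Ω Υ : ℝ → ℝ → ℝ)
    (hinvt : ∀ x y z : ℝ, φ y (F x y z) = ψ x z)
    (hφ : ∀ a b : ℝ, φ (Ω a b) (Υ a b) = a)
    (hψ : ∀ a b : ℝ, ψ (Ω a b) (Υ a b) = b)
    (hφinj : ∀ y : ℝ, Function.Injective (fun z => φ y z))
    (V : ℤ → ℤ → ℝ)
    (hV : ∀ i j : ℤ, Ω (V i (j+1)) (V (i+1) (j+1)) = Υ (V i j) (V (i+1) j))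
    (u : ℤ → ℤ → ℝ)
    (hu : ∀ i j : ℤ, u i j = Ω (V i j) (V (i+1) j)) :
    (∀ i j : ℤ, u (i+1) (j+1) = F (u i j) (u (i+1) j) (u i (j+1))) ∧
    (∀ i j : ℤ, V i j = φ (u i j) (u i (j+1)) ∧
      V (i+1) j = ψ (u i j) (u i (j+1))) := by
  have hrecover := eq_phi_psi_of_pqd hφ hψ hV hu
  refine ⟨fun i j => eq_of_apply_eq_of_invt hinvt (hφinj _) ?_, hrecover⟩
  -- both sides equal `V (i+1) j`, read off the squares at `(i+1, j)` and `(i, j)`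
  rw [← (hrecover (i+1) j).1, (hrecover i j).2]

/-- The inverse of the non-point transformation: from a solution `V`
of the transformed equation (pqd), the function `u(i,j) = Ω(V(i,j), V(i+1,j))`
is a solution of the quad-graph equation, and `V` is recovered from `u` via `φ`, `ψ`. -/
theorem inverse_transformation_maps_solutions
    (F : ℝ → ℝ → ℝ → ℝ) (φ ψ Ω Υ : ℝ → ℝ → ℝ)
    (hinvt : ∀ x y z : ℝ, φ y (F x y z) = ψ x z)
    (hΩ : ∀ w z : ℝ, Ω (φ w z) (ψ w z) = w)
    (hΥ : ∀ w z : ℝ, Υ (φ w z) (ψ w z) = z)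
    (hφ : ∀ a b : ℝ, φ (Ω a b) (Υ a b) = a)
    (hψ : ∀ a b : ℝ, ψ (Ω a b) (Υ a b) = b)
    (hφinj : ∀ y : ℝ, Function.Injective (fun z => φ y z))
    (V : ℤ → ℤ → ℝ)
    (hV : ∀ i j : ℤ, Ω (V i (j+1)) (V (i+1) (j+1)) = Υ (V i j) (V (i+1) j))
    (u : ℤ → ℤ → ℝ)
    (hu : ∀ i j : ℤ, u i j = Ω (V i j) (V (i+1) j)) :
    (∀ i j : ℤ, u (i+1) (j+1) = F (u i j) (u (i+1) j) (u i (j+1))) ∧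
    (∀ i j : ℤ, V i j = φ (u i j) (u i (j+1)) ∧
      V (i+1) j = ψ (u i j) (u i (j+1))) :=
  inverse_transformation_maps_solutions_general F φ ψ Ω Υ hinvt hφ hψ hφinj V hV u hu
end

section
/- (Theorem 1, i-integral direction.) Let F : ℝ³ → ℝ and φ, ψ : ℝ² → ℝ satisfy φ(y, F(x,y,z)) = ψ(x,z) for all x,y,z ∈ ℝ; let Ω, Υ : ℝ² → ℝ be a two-sided inverse of (φ, ψ), and suppose that for every y ∈ ℝ the map z ↦ φ(y,z) is injective. If I : ℝ^{m+1} → ℝ is an i-integral of the quad-graph equation (its value along m+1 consecutive horizontal points is unchanged by the unit shift in j, for every solution), then the function Î : ℝ^{m+2} → ℝ defined by Î(v_0, v_1, …, v_{m+1}) := I(Ω(v_0,v_1), Ω(v_1,v_2), …, Ω(v_m,v_{m+1})) is an i-integral of the transformed equation (pqd): for every solution V of (pqd) and all i,j ∈ ℤ, Î(V(i,j+1), …, V(i+m+1,j+1)) = Î(V(i,j), …, V(i+m+1,j)). Moreover, if I and Ω are differentiable, the partial derivatives of I with respect to its first and last arguments never vanish, and both partial derivatives of Ω never vanish, then the partial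 derivatives of Î with respect to its first and last arguments never vanish (so Î has order m+1). -/
/-!
Setting `u(i,j) = Ω(V(i,j), V(i+1,j))` turns a solution `V` of (pqd) into a solution `u` of the
quad-graph equation: the (pqd) relation says `u(i,j+1) = Υ(V(i,j), V(i+1,j))`, so `(φ, ψ)` recovers
`V(i,j), V(i+1,j)` from `u(i,j), u(i,j+1)`, and (invt) together with the injectivity of `φ(y, ·)`
then forces `u(i+1,j+1) = F(u(i,j), u(i+1,j), u(i,j+1))`. Hence `Î`, which is `I` read along the
window of `u`, is conserved. Moving one end of the window of `V` moves only the corresponding end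
of the window of `u`, so the end partial derivatives of `Î` factor, by the chain rule, as those of
`I` times those of `Ω`.
-/

open Function

section Lattice

variable {α β γ : Type*}

def IsQuadSolution (F : α → α → α → α) (u : ℤ → ℤ → α) : Prop :=
  ∀ i j : ℤ, u (i+1) (j+1) = F (u i j) (u (i+1) j) (u i (j+1))

def IsPqdSolution (Ω Υ : β → β → α) (V : ℤ → ℤ → β) : Prop :=
  ∀ i j : ℤ, Ω (V i (j+1)) (V (i+1) (j+1)) = Υ (V i j) (V (i+1) j)

def window (u : ℤ → ℤ → α) (n : ℕ) (i j : ℤ) : Fin n → α :=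
  fun k => u (i + ((k : ℕ) : ℤ)) j

def IsIIntegral {n : ℕ} (IsSolution : (ℤ → ℤ → α) → Prop) (I : (Fin n → α) → γ) : Prop :=
  ∀ u, IsSolution u → ∀ i j : ℤ, I (window u n i (j+1)) = I (window u n i j)

def adjacentMap {n : ℕ} (f : β → β → α) (v : Fin (n+1) → β) : Fin n → α :=
  fun k => f (v k.castSucc) (v k.succ)

theorem adjacentMap_window (f : β → β → α) (V : ℤ → ℤ → β) (n : ℕ) (i j : ℤ) :
    adjacentMap f (window V (n+1) i j) = window (fun a b => f (V a b) (V (a+1) b)) n i j := by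
  funext k
  simp only [adjacentMap, window, Fin.val_castSucc, Fin.val_succ, Nat.cast_add, Nat.cast_one,
    add_assoc]

theorem IsPqdSolution.isQuadSolution {F : α → α → α → α} {φ ψ : α → α → β} {Ω Υ : β → β → α}
    (hinvt : ∀ x y z, φ y (F x y z) = ψ x z)
    (hφ : ∀ a b, φ (Ω a b) (Υ a b) = a) (hψ : ∀ a b, ψ (Ω a b) (Υ a b) = b)
    (hφinj : ∀ y, Injective (φ y)) {V : ℤ → ℤ → β} (hV : IsPqdSolution Ω Υ V) :
    IsQuadSolution F (fun a b => Ω (V a b) (V (a+1) b)) := by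
  set u : ℤ → ℤ → α := fun a b => Ω (V a b) (V (a+1) b)
  have hφu : ∀ a b, φ (u a b) (u a (b+1)) = V a b := fun a b => by
    simp only [u, hV a b, hφ]
  have hψu : ∀ a b, ψ (u a b) (u a (b+1)) = V (a+1) b := fun a b => by
    simp only [u, hV a b, hψ]
  intro a b
  apply hφinj (u (a+1) b)
  rw [hinvt, hφu, hψu]

theorem IsIIntegral.comp_adjacentMap {n : ℕ} {F : α → α → α → α} {φ ψ : α → α → β}
    {Ω Υ : β → β → α} (hinvt : ∀ x y z, φ y (F x y z) = ψ x z)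
    (hφ : ∀ a b, φ (Ω a b) (Υ a b) = a) (hψ : ∀ a b, ψ (Ω a b) (Υ a b) = b)
    (hφinj : ∀ y, Injective (φ y)) {I : (Fin n → α) → γ} (hI : IsIIntegral (IsQuadSolution F) I) :
    IsIIntegral (IsPqdSolution Ω Υ) (I ∘ adjacentMap Ω) := by
  intro V hV i j
  simp only [comp_apply, adjacentMap_window]
  exact hI _ (hV.isQuadSolution hinvt hφ hψ hφinj) i j

theorem adjacentMap_update_zero {n : ℕ} (f : β → β → α) (v : Fin (n+2) → β) (t : β) :
    adjacentMap f (update v 0 t) = update (adjacentMap f v) 0 (f t (v 1)) := by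
  funext k
  rcases eq_or_ne k 0 with rfl | hk
  · simp [adjacentMap]
  · simp [adjacentMap, hk, Fin.succ_ne_zero]

theorem adjacentMap_update_last {n : ℕ} (f : β → β → α) (v : Fin (n+2) → β) (t : β) :
    adjacentMap f (update v (Fin.last (n+1)) t) =
      update (adjacentMap f v) (Fin.last n) (f (v (Fin.last n).castSucc) t) := by
  funext k
  have hcast : k.castSucc ≠ Fin.last (n+1) := (Fin.castSucc_lt_last k).ne
  rcases eq_or_ne k (Fin.last n) with rfl | hk
  · simp [adjacentMap, hcast]
  · have hsucc : k.succ ≠ Fin.last (n+1) := by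
      rw [← Fin.succ_last]
      exact Fin.succ_injective _ |>.ne hk
    simp [adjacentMap, hk, hcast, hsucc]

end Lattice

section Derivatives

variable {n : ℕ}

theorem deriv_comp_update {I : (Fin n → ℝ) → ℝ} (hI : Differentiable ℝ I) (x : Fin n → ℝ)
    (i : Fin n) {g : ℝ → ℝ} {a : ℝ} (hg : DifferentiableAt ℝ g a) :
    deriv (fun t => I (update x i (g t))) a =
      deriv (fun s => I (update x i s)) (g a) * deriv g a := by
  have hIi : DifferentiableAt ℝ (fun s => I (update x i s)) (g a) :=
    hI.differentiableAt.comp _ (hasFDerivAt_update x (g a)).differentiableAt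
  exact deriv_comp (h₂ := fun s => I (update x i s)) a hIi hg

theorem deriv_comp_adjacentMap_update_zero {I : (Fin (n+1) → ℝ) → ℝ} {Ω : ℝ → ℝ → ℝ}
    (hI : Differentiable ℝ I) (hΩ : Differentiable ℝ (fun p : ℝ × ℝ => Ω p.1 p.2))
    (v : Fin (n+2) → ℝ) :
    deriv (fun t => I (adjacentMap Ω (update v 0 t))) (v 0) =
      deriv (fun s => I (update (adjacentMap Ω v) 0 s)) (adjacentMap Ω v 0) *
        deriv (fun t => Ω t (v 1)) (v 0) := by
  simp only [adjacentMap_update_zero]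
  exact deriv_comp_update hI _ _
    (hΩ.comp (differentiable_id.prodMk (differentiable_const _))).differentiableAt

theorem deriv_comp_adjacentMap_update_last {I : (Fin (n+1) → ℝ) → ℝ} {Ω : ℝ → ℝ → ℝ}
    (hI : Differentiable ℝ I) (hΩ : Differentiable ℝ (fun p : ℝ × ℝ => Ω p.1 p.2))
    (v : Fin (n+2) → ℝ) :
    deriv (fun t => I (adjacentMap Ω (update v (Fin.last (n+1)) t))) (v (Fin.last (n+1))) =
      deriv (fun s => I (update (adjacentMap Ω v) (Fin.last n) s))
          (adjacentMap Ω v (Fin.last n)) *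
        deriv (fun t => Ω (v (Fin.last n).castSucc) t) (v (Fin.last (n+1))) := by
  simp only [adjacentMap_update_last]
  exact deriv_comp_update hI _ _
    (hΩ.comp ((differentiable_const _).prodMk differentiable_id)).differentiableAt

end Derivatives

theorem i_integral_transforms_general
    (m : ℕ) (F : ℝ → ℝ → ℝ → ℝ) (φ ψ Ω Υ : ℝ → ℝ → ℝ)
    (hinvt : ∀ x y z : ℝ, φ y (F x y z) = ψ x z)
    (hφ : ∀ a b : ℝ, φ (Ω a b) (Υ a b) = a)
    (hψ : ∀ a b : ℝ, ψ (Ω a b) (Υ a b) = b)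
    (hφinj : ∀ y : ℝ, Function.Injective (fun z => φ y z))
    (I : (Fin (m+1) → ℝ) → ℝ)
    (hI : ∀ u : ℤ → ℤ → ℝ,
      (∀ i j : ℤ, u (i+1) (j+1) = F (u i j) (u (i+1) j) (u i (j+1))) →
      ∀ i j : ℤ,
        I (fun k => u (i + ((k : ℕ) : ℤ)) (j+1)) =
        I (fun k => u (i + ((k : ℕ) : ℤ)) j))
    (Ihat : (Fin (m+2) → ℝ) → ℝ)
    (hIhat : ∀ v : Fin (m+2) → ℝ,
      Ihat v = I (fun k => Ω (v k.castSucc) (v k.succ))) :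
    (∀ V : ℤ → ℤ → ℝ,
      (∀ i j : ℤ, Ω (V i (j+1)) (V (i+1) (j+1)) = Υ (V i j) (V (i+1) j)) →
      ∀ i j : ℤ,
        Ihat (fun k => V (i + ((k : ℕ) : ℤ)) (j+1)) =
        Ihat (fun k => V (i + ((k : ℕ) : ℤ)) j)) ∧
    ((Differentiable ℝ I ∧
      Differentiable ℝ (fun p : ℝ × ℝ => Ω p.1 p.2) ∧
      (∀ x : Fin (m+1) → ℝ,
        deriv (fun t => I (Function.update x 0 t)) (x 0) ≠ 0) ∧
      (∀ x : Fin (m+1) → ℝ,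
        deriv (fun t => I (Function.update x (Fin.last m) t)) (x (Fin.last m)) ≠ 0) ∧
      (∀ a b : ℝ, deriv (fun t => Ω t b) a ≠ 0) ∧
      (∀ a b : ℝ, deriv (fun t => Ω a t) b ≠ 0)) →
      ∀ v : Fin (m+2) → ℝ,
        deriv (fun t => Ihat (Function.update v 0 t)) (v 0) ≠ 0 ∧
        deriv (fun t => Ihat (Function.update v (Fin.last (m+1)) t))
          (v (Fin.last (m+1))) ≠ 0) := by
  obtain rfl : Ihat = I ∘ adjacentMap Ω := funext hIhat
  refine ⟨IsIIntegral.comp_adjacentMap hinvt hφ hψ hφinj hI, ?_⟩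
  rintro ⟨hIdiff, hΩdiff, hI0, hIlast, hΩ1, hΩ2⟩ v
  simp only [comp_apply]
  rw [deriv_comp_adjacentMap_update_zero hIdiff hΩdiff,
    deriv_comp_adjacentMap_update_last hIdiff hΩdiff]
  exact ⟨mul_ne_zero (hI0 _) (hΩ1 _ _), mul_ne_zero (hIlast _) (hΩ2 _ _)⟩

/-- Theorem 1, i-integral direction: if `I` is an `i`-integral of
order `m` of the quad-graph equation, then
`Î(v_0,…,v_{m+1}) = I(Ω(v_0,v_1),…,Ω(v_m,v_{m+1}))` is an `i`-integral of the
transformed equation (pqd); moreover under the differentiability and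
nondegeneracy assumptions on `I` and `Ω`, the first and last partial derivatives
of `Î` never vanish, so `Î` has order `m+1`. -/
theorem i_integral_transforms
    (m : ℕ) (F : ℝ → ℝ → ℝ → ℝ) (φ ψ Ω Υ : ℝ → ℝ → ℝ)
    (hinvt : ∀ x y z : ℝ, φ y (F x y z) = ψ x z)
    (hΩ : ∀ w z : ℝ, Ω (φ w z) (ψ w z) = w)
    (hΥ : ∀ w z : ℝ, Υ (φ w z) (ψ w z) = z)
    (hφ : ∀ a b : ℝ, φ (Ω a b) (Υ a b) = a)
    (hψ : ∀ a b : ℝ, ψ (Ω a b) (Υ a b) = b)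
    (hφinj : ∀ y : ℝ, Function.Injective (fun z => φ y z))
    (I : (Fin (m+1) → ℝ) → ℝ)
    (hI : ∀ u : ℤ → ℤ → ℝ,
      (∀ i j : ℤ, u (i+1) (j+1) = F (u i j) (u (i+1) j) (u i (j+1))) →
      ∀ i j : ℤ,
        I (fun k => u (i + ((k : ℕ) : ℤ)) (j+1)) =
        I (fun k => u (i + ((k : ℕ) : ℤ)) j))
    (Ihat : (Fin (m+2) → ℝ) → ℝ)
    (hIhat : ∀ v : Fin (m+2) → ℝ,
      Ihat v = I (fun k => Ω (v k.castSucc) (v k.succ))) :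
    (∀ V : ℤ → ℤ → ℝ,
      (∀ i j : ℤ, Ω (V i (j+1)) (V (i+1) (j+1)) = Υ (V i j) (V (i+1) j)) →
      ∀ i j : ℤ,
        Ihat (fun k => V (i + ((k : ℕ) : ℤ)) (j+1)) =
        Ihat (fun k => V (i + ((k : ℕ) : ℤ)) j)) ∧
    ((Differentiable ℝ I ∧
      Differentiable ℝ (fun p : ℝ × ℝ => Ω p.1 p.2) ∧
      (∀ x : Fin (m+1) → ℝ,
        deriv (fun t => I (Function.update x 0 t)) (x 0) ≠ 0) ∧
      (∀ x : Fin (m+1) → ℝ,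
        deriv (fun t => I (Function.update x (Fin.last m) t)) (x (Fin.last m)) ≠ 0) ∧
      (∀ a b : ℝ, deriv (fun t => Ω t b) a ≠ 0) ∧
      (∀ a b : ℝ, deriv (fun t => Ω a t) b ≠ 0)) →
      ∀ v : Fin (m+2) → ℝ,
        deriv (fun t => Ihat (Function.update v 0 t)) (v 0) ≠ 0 ∧
        deriv (fun t => Ihat (Function.update v (Fin.last (m+1)) t))
          (v (Fin.last (m+1))) ≠ 0) :=
  i_integral_transforms_general m F φ ψ Ω Υ hinvt hφ hψ hφinj I hI Ihat hIhat
end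

section
/- (Theorem 1, converse for i-integrals.) Let F : ℝ³ → ℝ and φ, ψ : ℝ² → ℝ satisfy φ(y, F(x,y,z)) = ψ(x,z) for all x,y,z ∈ ℝ, and let Ω, Υ : ℝ² → ℝ be a left inverse of (φ, ψ). Let I : ℝ^{m+1} → ℝ and define Î : ℝ^{m+2} → ℝ by Î(v_0, …, v_{m+1}) := I(Ω(v_0,v_1), …, Ω(v_m,v_{m+1})). If Î is an i-integral of the transformed equation (pqd) (for every solution V of (pqd) and all i,j: Î(V(i,j+1), …, V(i+m+1,j+1)) = Î(V(i,j), …, V(i+m+1,j))), then I is an i-integral of the quad-graph equation: for every solution u and all i,j ∈ ℤ, I(u(i,j+1), …, u(i+m,j+1)) = I(u(i,j), …, u(i+m,j)). -/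
/-!
For a solution `u` of the quad-graph equation put `V(a,b) := φ(u(a,b), u(a,b+1))`.
By (invt), `V(a+1,b) = ψ(u(a,b), u(a,b+1))`, so the left inverse recovers
`Ω(V(a,b), V(a+1,b)) = u(a,b)` and `Υ(V(a,b), V(a+1,b)) = u(a,b+1)`. Hence both sides of (pqd)
equal `u(a,b+1)`, i.e. `V` solves (pqd), and `Î` on a horizontal window of `V` is `I` on the
corresponding window of `u`; the conservation law of `Î` along `V` is that of `I` along `u`.
-/

section QuadGraph

variable {α β : Type*}

def IsQuadGraphSolution (F : α → α → α → α) (u : ℤ → ℤ → α) : Prop :=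
  ∀ i j : ℤ, u (i + 1) (j + 1) = F (u i j) (u (i + 1) j) (u i (j + 1))

def IsPQDSolution (Ω Υ : β → β → α) (V : ℤ → ℤ → β) : Prop :=
  ∀ i j : ℤ, Ω (V i (j + 1)) (V (i + 1) (j + 1)) = Υ (V i j) (V (i + 1) j)

def pqdLift (φ : α → α → β) (u : ℤ → ℤ → α) (a b : ℤ) : β :=
  φ (u a b) (u a (b + 1))

variable {F : α → α → α → α} {φ ψ : α → α → β} {Ω Υ : β → β → α} {u : ℤ → ℤ → α}

theorem pqdLift_add_one (hinvt : ∀ x y z, φ y (F x y z) = ψ x z)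
    (hu : IsQuadGraphSolution F u) (a b : ℤ) :
    pqdLift φ u (a + 1) b = ψ (u a b) (u a (b + 1)) := by
  rw [pqdLift, hu, hinvt]

theorem Ω_pqdLift (hinvt : ∀ x y z, φ y (F x y z) = ψ x z) (hΩ : ∀ w z, Ω (φ w z) (ψ w z) = w)
    (hu : IsQuadGraphSolution F u) (a b : ℤ) :
    Ω (pqdLift φ u a b) (pqdLift φ u (a + 1) b) = u a b := by
  rw [pqdLift_add_one hinvt hu]
  exact hΩ _ _

theorem Υ_pqdLift (hinvt : ∀ x y z, φ y (F x y z) = ψ x z) (hΥ : ∀ w z, Υ (φ w z) (ψ w z) = z)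
    (hu : IsQuadGraphSolution F u) (a b : ℤ) :
    Υ (pqdLift φ u a b) (pqdLift φ u (a + 1) b) = u a (b + 1) := by
  rw [pqdLift_add_one hinvt hu]
  exact hΥ _ _

theorem isPQDSolution_pqdLift (hinvt : ∀ x y z, φ y (F x y z) = ψ x z)
    (hΩ : ∀ w z, Ω (φ w z) (ψ w z) = w) (hΥ : ∀ w z, Υ (φ w z) (ψ w z) = z)
    (hu : IsQuadGraphSolution F u) :
    IsPQDSolution Ω Υ (pqdLift φ u) := fun a b => by
  rw [Ω_pqdLift hinvt hΩ hu, Υ_pqdLift hinvt hΥ hu]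

theorem Ω_pqdLift_window (hinvt : ∀ x y z, φ y (F x y z) = ψ x z)
    (hΩ : ∀ w z, Ω (φ w z) (ψ w z) = w) (hu : IsQuadGraphSolution F u) (m : ℕ) (i b : ℤ) :
    (fun k : Fin (m + 1) =>
      Ω (pqdLift φ u (i + ((k.castSucc : ℕ) : ℤ)) b) (pqdLift φ u (i + ((k.succ : ℕ) : ℤ)) b)) =
      fun k : Fin (m + 1) => u (i + ((k : ℕ) : ℤ)) b := by
  funext k
  rw [Fin.val_castSucc, Fin.val_succ, Nat.cast_succ, ← add_assoc, Ω_pqdLift hinvt hΩ hu]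

end QuadGraph

/-- Theorem 1, converse for i-integrals: if
`Î(v_0,…,v_{m+1}) = I(Ω(v_0,v_1),…,Ω(v_m,v_{m+1}))` is an `i`-integral of the
transformed equation (pqd), then `I` is an `i`-integral of the quad-graph
equation. -/
theorem i_integral_transforms_back
    (m : ℕ) (F : ℝ → ℝ → ℝ → ℝ) (φ ψ Ω Υ : ℝ → ℝ → ℝ)
    (hinvt : ∀ x y z : ℝ, φ y (F x y z) = ψ x z)
    (hΩ : ∀ w z : ℝ, Ω (φ w z) (ψ w z) = w)
    (hΥ : ∀ w z : ℝ, Υ (φ w z) (ψ w z) = z)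
    (I : (Fin (m+1) → ℝ) → ℝ)
    (Ihat : (Fin (m+2) → ℝ) → ℝ)
    (hIhat : ∀ v : Fin (m+2) → ℝ,
      Ihat v = I (fun k => Ω (v k.castSucc) (v k.succ)))
    (hint : ∀ V : ℤ → ℤ → ℝ,
      (∀ i j : ℤ, Ω (V i (j+1)) (V (i+1) (j+1)) = Υ (V i j) (V (i+1) j)) →
      ∀ i j : ℤ,
        Ihat (fun k => V (i + ((k : ℕ) : ℤ)) (j+1)) =
        Ihat (fun k => V (i + ((k : ℕ) : ℤ)) j)) :
    ∀ u : ℤ → ℤ → ℝ,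
      (∀ i j : ℤ, u (i+1) (j+1) = F (u i j) (u (i+1) j) (u i (j+1))) →
      ∀ i j : ℤ,
        I (fun k => u (i + ((k : ℕ) : ℤ)) (j+1)) =
        I (fun k => u (i + ((k : ℕ) : ℤ)) j) := by
  intro u hu i j
  have hV := hint (pqdLift φ u) (isPQDSolution_pqdLift hinvt hΩ hΥ hu) i j
  rwa [hIhat, hIhat, Ω_pqdLift_window hinvt hΩ hu, Ω_pqdLift_window hinvt hΩ hu] at hV
end

section
/- (Lemma 2.) Let F : ℝ³ → ℝ, φ, ψ, g : ℝ² → ℝ satisfy, for all x,y,z,w ∈ ℝ: φ(y, F(x,y,z)) = ψ(x,z), F(x,y,z) = g(ψ(x,z), y), and g(φ(y,w), y) = w. Assume the richness property: for every (a, b, c_1, …, c_n) ∈ ℝ^{n+2} there exists a solution u of the quad-graph equation with u(0,0) = a, u(1,0) = b, and u(0,l) = c_l for l = 1, …, n. If J : ℝ^{n+1} → ℝ is a j-integral of the quad-graph equation, then there exists Φ : ℝⁿ → ℝ such that J(x_0, x_1, …, x_n) = Φ(φ(x_0,x_1), φ(x_1,x_2), …, φ(x_{n-1},x_n)) for all (x_0,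 …, x_n) ∈ ℝ^{n+1}. -/
/-!
Shifting a solution one step back along the `i`-direction does not change `J`, and by (invt)
the `ψ`-differences of row `-1` are the `φ`-differences of row `0`; so `J x = J y` for some `y`
whose `ψ`-differences are the `φ`-differences of `x`. It remains to see that `J` depends on its
argument only through its `ψ`-differences: since `F x y z = g (ψ x z) y`, the row above a given
row is determined by its first entry and the `ψ`-differences of the given row, so two solutions
with these data equal have the same row `1`, and `J` of row `0` equals `J` of row `1`.
-/

namespace QuadGraph

variable {n : ℕ} {F : ℝ → ℝ → ℝ → ℝ} {φ ψ g : ℝ → ℝ → ℝ} {u w : ℤ → ℤ → ℝ}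
  {J : (Fin (n+1) → ℝ) → ℝ}

def IsSolution (F : ℝ → ℝ → ℝ → ℝ) (u : ℤ → ℤ → ℝ) : Prop :=
  ∀ i j : ℤ, u (i+1) (j+1) = F (u i j) (u (i+1) j) (u i (j+1))

def IsJIntegral (F : ℝ → ℝ → ℝ → ℝ) (J : (Fin (n+1) → ℝ) → ℝ) : Prop :=
  ∀ u : ℤ → ℤ → ℝ, IsSolution F u →
    ∀ i j : ℤ, J (fun l => u (i+1) (j + ((l : ℕ) : ℤ))) = J (fun l => u i (j + ((l : ℕ) : ℤ)))

def row (n : ℕ) (u : ℤ → ℤ → ℝ) (i : ℤ) : Fin (n+1) → ℝ := fun l => u i (l : ℕ)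

def consecutive (f : ℝ → ℝ → ℝ) (x : Fin (n+1) → ℝ) : Fin n → ℝ :=
  fun k => f (x k.castSucc) (x k.succ)

lemma consecutive_row (f : ℝ → ℝ → ℝ) (i : ℤ) (k : Fin n) :
    consecutive f (row n u i) k = f (u i (k : ℕ)) (u i ((k : ℕ) + 1)) := by
  simp [consecutive, row]

lemma IsSolution.consecutive_row_succ (hinvt : ∀ x y z : ℝ, φ y (F x y z) = ψ x z)
    (hu : IsSolution F u) (i : ℤ) :
    consecutive φ (row n u (i+1)) = consecutive ψ (row n u i) := by
  ext k
  rw [consecutive_row, consecutive_row, hu, hinvt]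

lemma IsSolution.row_succ_eq (hFg : ∀ x y z : ℝ, F x y z = g (ψ x z) y)
    (hu : IsSolution F u) (hw : IsSolution F w) {i : ℤ} (h₀ : u (i+1) 0 = w (i+1) 0)
    (hψ : consecutive ψ (row n u i) = consecutive ψ (row n w i)) :
    row n u (i+1) = row n w (i+1) := by
  ext ⟨k, hk⟩
  induction k with
  | zero => simpa [row] using h₀
  | succ k ih =>
    have hψk := congrFun hψ ⟨k, by omega⟩
    simp only [consecutive_row] at hψk
    simp only [row, Nat.cast_succ] at ih ⊢
    rw [hu, hw, hFg, hFg, hψk, ih (by omega)]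

lemma IsJIntegral.apply_row_succ (hJ : IsJIntegral F J) (hu : IsSolution F u) (i : ℤ) :
    J (row n u (i+1)) = J (row n u i) := by
  have h := hJ u hu i 0
  simp only [zero_add] at h
  exact h

variable (hrich : ∀ (a b : ℝ) (c : Fin n → ℝ), ∃ u : ℤ → ℤ → ℝ, IsSolution F u ∧
    u 0 0 = a ∧ u 1 0 = b ∧ ∀ l : Fin n, u 0 (((l : ℕ) : ℤ) + 1) = c l)
include hrich

lemma exists_isSolution_row_zero_eq (x : Fin (n+1) → ℝ) (b : ℝ) :
    ∃ u, IsSolution F u ∧ row n u 0 = x ∧ u 1 0 = b := by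
  obtain ⟨u, hu, h₀, h₁, hc⟩ := hrich (x 0) b fun l => x l.succ
  refine ⟨u, hu, funext fun l => ?_, h₁⟩
  cases l using Fin.cases with
  | zero => simpa [row] using h₀
  | succ l => simpa [row] using hc l

lemma IsJIntegral.factorsThrough_consecutive (hFg : ∀ x y z : ℝ, F x y z = g (ψ x z) y)
    (hJ : IsJIntegral F J) : J.FactorsThrough (consecutive ψ) := by
  intro x y hxy
  obtain ⟨u, hu, rfl, hu₁⟩ := exists_isSolution_row_zero_eq hrich x 0
  obtain ⟨w, hw, rfl, hw₁⟩ := exists_isSolution_row_zero_eq hrich y 0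
  have hrow₁ : row n u (0+1) = row n w (0+1) :=
    hu.row_succ_eq hFg hw (by simpa [hw₁] using hu₁) hxy
  rw [← hJ.apply_row_succ hu, ← hJ.apply_row_succ hw, hrow₁]

lemma IsJIntegral.exists_consecutive_eq (hinvt : ∀ x y z : ℝ, φ y (F x y z) = ψ x z)
    (hJ : IsJIntegral F J) (x : Fin (n+1) → ℝ) :
    ∃ y, consecutive ψ y = consecutive φ x ∧ J y = J x := by
  obtain ⟨u, hu, rfl, -⟩ := exists_isSolution_row_zero_eq hrich x 0
  have hrow : consecutive φ (row n u (-1+1)) = consecutive ψ (row n u (-1)) :=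
    hu.consecutive_row_succ hinvt (-1)
  have hJrow : J (row n u (-1+1)) = J (row n u (-1)) := hJ.apply_row_succ hu (-1)
  rw [neg_add_cancel] at hrow hJrow
  exact ⟨row n u (-1), hrow.symm, hJrow.symm⟩

end QuadGraph

open QuadGraph in
theorem j_integral_representation_general
    (n : ℕ) (F : ℝ → ℝ → ℝ → ℝ) (φ ψ g : ℝ → ℝ → ℝ)
    (hinvt : ∀ x y z : ℝ, φ y (F x y z) = ψ x z)
    (hFg : ∀ x y z : ℝ, F x y z = g (ψ x z) y)
    (hrich : ∀ (a b : ℝ) (c : Fin n → ℝ),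
      ∃ u : ℤ → ℤ → ℝ,
        (∀ i j : ℤ, u (i+1) (j+1) = F (u i j) (u (i+1) j) (u i (j+1))) ∧
        u 0 0 = a ∧ u 1 0 = b ∧
        ∀ l : Fin n, u 0 (((l : ℕ) : ℤ) + 1) = c l)
    (J : (Fin (n+1) → ℝ) → ℝ)
    (hJ : ∀ u : ℤ → ℤ → ℝ,
      (∀ i j : ℤ, u (i+1) (j+1) = F (u i j) (u (i+1) j) (u i (j+1))) →
      ∀ i j : ℤ,
        J (fun l => u (i+1) (j + ((l : ℕ) : ℤ))) =
        J (fun l => u i (j + ((l : ℕ) : ℤ)))) :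
    ∃ Φ : (Fin n → ℝ) → ℝ,
      ∀ x : Fin (n+1) → ℝ,
        J x = Φ (fun k : Fin n => φ (x k.castSucc) (x k.succ)) := by
  have hJint : IsJIntegral F J := hJ
  refine ⟨Function.extend (consecutive ψ) J 0, fun x => ?_⟩
  obtain ⟨y, hy, hJy⟩ := hJint.exists_consecutive_eq hrich hinvt x
  rw [← hJy, ← (hJint.factorsThrough_consecutive hrich hFg).extend_apply 0 y, hy]
  rfl

/-- Lemma 2: under the structural assumptions on `F`, `φ`, `ψ`, `g`
and the richness of the solution set, every `j`-integral
`J : ℝ^{n+1} → ℝ` of the quad-graph equation can be written as a function `Φ` of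
`(φ(x_0,x_1), φ(x_1,x_2), …, φ(x_{n-1},x_n))`. -/
theorem j_integral_representation
    (n : ℕ) (F : ℝ → ℝ → ℝ → ℝ) (φ ψ g : ℝ → ℝ → ℝ)
    (hinvt : ∀ x y z : ℝ, φ y (F x y z) = ψ x z)
    (hFg : ∀ x y z : ℝ, F x y z = g (ψ x z) y)
    (hg : ∀ y w : ℝ, g (φ y w) y = w)
    (hrich : ∀ (a b : ℝ) (c : Fin n → ℝ),
      ∃ u : ℤ → ℤ → ℝ,
        (∀ i j : ℤ, u (i+1) (j+1) = F (u i j) (u (i+1) j) (u i (j+1))) ∧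
        u 0 0 = a ∧ u 1 0 = b ∧
        ∀ l : Fin n, u 0 (((l : ℕ) : ℤ) + 1) = c l)
    (J : (Fin (n+1) → ℝ) → ℝ)
    (hJ : ∀ u : ℤ → ℤ → ℝ,
      (∀ i j : ℤ, u (i+1) (j+1) = F (u i j) (u (i+1) j) (u i (j+1))) →
      ∀ i j : ℤ,
        J (fun l => u (i+1) (j + ((l : ℕ) : ℤ))) =
        J (fun l => u i (j + ((l : ℕ) : ℤ)))) :
    ∃ Φ : (Fin n → ℝ) → ℝ,
      ∀ x : Fin (n+1) → ℝ,
        J x = Φ (fun k : Fin n => φ (x k.castSucc) (x k.succ)) :=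
  j_integral_representation_general n F φ ψ g hinvt hFg hrich J hJ
end

section
/- (i-integral of the discrete Liouville equation.) Let u : ℤ × ℤ → ℝ satisfy u(i+1,j+1) · u(i,j) = (u(i+1,j) − 1)(u(i,j+1) − 1) for all i,j ∈ ℤ, and assume u(i,j) ≠ 0 and u(i,j) ≠ 1 for all i,j. Then the function I(i,j) := (u(i+2,j)/(u(i+1,j) − 1) + 1) · ((u(i,j) − 1)/u(i+1,j) + 1) satisfies I(i,j+1) = I(i,j) for all i,j ∈ ℤ. -/
/-!
Write `I = (u₂ + u₁ - 1)/(u₁ - 1) · (u₀ + u₁ - 1)/u₁` with `uₖ = u(i+k, j)`. Solving the equation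
on the two quads above `[i, i+2] × {j}` for the ratios occurring in `I(i, j+1)` gives
`u(i+2,j+1)/(u(i+1,j+1) - 1) = (u₂ - 1)/u₁` and `(u(i,j+1) - 1)/u(i+1,j+1) = u₀/(u₁ - 1)`,
so the shift in `j` only swaps the denominators `u₁ - 1` and `u₁` of the two factors.
-/

section LiouvilleQuad

variable {K : Type*} [Field K] {u u₁₀ u₀₁ u₁₁ : K}

theorem liouville_quad_div_sub_one (h : u₁₁ * u = (u₁₀ - 1) * (u₀₁ - 1))
    (hu : u ≠ 0) (hu₀₁ : u₀₁ ≠ 1) : u₁₁ / (u₀₁ - 1) = (u₁₀ - 1) / u :=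
  (div_eq_div_iff (sub_ne_zero.mpr hu₀₁) hu).mpr h

theorem liouville_quad_sub_one_div (h : u₁₁ * u = (u₁₀ - 1) * (u₀₁ - 1))
    (hu₁₁ : u₁₁ ≠ 0) (hu₁₀ : u₁₀ ≠ 1) : (u₀₁ - 1) / u₁₁ = u / (u₁₀ - 1) :=
  (div_eq_div_iff hu₁₁ (sub_ne_zero.mpr hu₁₀)).mpr (by linear_combination -h)

end LiouvilleQuad

theorem add_one_mul_add_one_swap_denominators {K : Type*} [Field K] {a b c : K}
    (hb₀ : b ≠ 0) (hb₁ : b ≠ 1) :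
    ((c - 1) / b + 1) * (a / (b - 1) + 1) = (c / (b - 1) + 1) * ((a - 1) / b + 1) := by
  have : b - 1 ≠ 0 := sub_ne_zero.mpr hb₁
  field_simp
  ring

/-- the function
`I = (u_{2,0}/(u_{1,0}-1) + 1)((u-1)/u_{1,0} + 1)` is an `i`-integral of the
discrete Liouville equation `u_{1,1} u = (u_{1,0}-1)(u_{0,1}-1)`. -/
theorem discrete_liouville_i_integral
    (u : ℤ → ℤ → ℝ)
    (hu : ∀ i j : ℤ, u (i+1) (j+1) * u i j = (u (i+1) j - 1) * (u i (j+1) - 1))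
    (h0 : ∀ i j : ℤ, u i j ≠ 0)
    (h1 : ∀ i j : ℤ, u i j ≠ 1) :
    ∀ i j : ℤ,
      (u (i+2) (j+1) / (u (i+1) (j+1) - 1) + 1) *
        ((u i (j+1) - 1) / u (i+1) (j+1) + 1) =
      (u (i+2) j / (u (i+1) j - 1) + 1) *
        ((u i j - 1) / u (i+1) j + 1) := by
  intro i j
  have hquad₁ := hu (i + 1) j
  rw [show i + 1 + 1 = i + 2 by ring] at hquad₁
  rw [liouville_quad_div_sub_one hquad₁ (h0 (i + 1) j) (h1 (i + 1) (j + 1)),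
    liouville_quad_sub_one_div (hu i j) (h0 (i + 1) (j + 1)) (h1 (i + 1) j)]
  exact add_one_mul_add_one_swap_denominators (h0 (i + 1) j) (h1 (i + 1) j)
end

section
/- (j-integral of the discrete Liouville equation.) Let u : ℤ × ℤ → ℝ satisfy u(i+1,j+1) · u(i,j) = (u(i+1,j) − 1)(u(i,j+1) − 1) for all i,j ∈ ℤ, and assume u(i,j) ≠ 0 and u(i,j) ≠ 1 for all i,j. Then the function J(i,j) := (u(i,j+2)/(u(i,j+1) − 1) + 1) · ((u(i,j) − 1)/u(i,j+1) + 1) satisfies J(i+1,j) = J(i,j) for all i,j ∈ ℤ. -/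
/-!
Solving the Liouville relation `u₁₁ u = (u₁₀ - 1)(u₀₁ - 1)` for a ratio in two ways gives
`u₁₂ / (u₁₁ - 1) = (u₀₂ - 1) / u₀₁` and `(u₁₀ - 1) / u₁₁ = u / (u₀₁ - 1)`. So the shift in `i`
turns the two factors of `J` into the factors of `J` with `u` and `u₀₂` exchanged, and over the
common denominator `u₀₁ (u₀₁ - 1)` the product is symmetric in `u` and `u₀₂`.
-/

lemma div_sub_one_add_one_mul_comm {K : Type*} [Field K] (a b c : K) (hb : b ≠ 0)
    (hb1 : b - 1 ≠ 0) :
    ((c - 1) / b + 1) * (a / (b - 1) + 1) = (c / (b - 1) + 1) * ((a - 1) / b + 1) := by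
  field_simp
  ring

section Liouville

variable {u : ℤ → ℤ → ℝ}
  (hu : ∀ i j : ℤ, u (i+1) (j+1) * u i j = (u (i+1) j - 1) * (u i (j+1) - 1))
include hu

lemma liouville_sub_one_div_eq (i j : ℤ) (h0 : u (i+1) (j+1) ≠ 0) (h1 : u i (j+1) ≠ 1) :
    (u (i+1) j - 1) / u (i+1) (j+1) = u i j / (u i (j+1) - 1) := by
  rw [div_eq_div_iff h0 (sub_ne_zero.mpr h1)]
  linear_combination -hu i j

lemma liouville_div_sub_one_eq (i j : ℤ) (h0 : u i j ≠ 0) (h1 : u (i+1) j ≠ 1) :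
    u (i+1) (j+1) / (u (i+1) j - 1) = (u i (j+1) - 1) / u i j := by
  rw [div_eq_div_iff (sub_ne_zero.mpr h1) h0]
  linear_combination hu i j

end Liouville

/-- the function
`J = (u_{0,2}/(u_{0,1}-1) + 1)((u-1)/u_{0,1} + 1)` is a `j`-integral of the
discrete Liouville equation `u_{1,1} u = (u_{1,0}-1)(u_{0,1}-1)`. -/
theorem discrete_liouville_j_integral
    (u : ℤ → ℤ → ℝ)
    (hu : ∀ i j : ℤ, u (i+1) (j+1) * u i j = (u (i+1) j - 1) * (u i (j+1) - 1))
    (h0 : ∀ i j : ℤ, u i j ≠ 0)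
    (h1 : ∀ i j : ℤ, u i j ≠ 1) :
    ∀ i j : ℤ,
      (u (i+1) (j+2) / (u (i+1) (j+1) - 1) + 1) *
        ((u (i+1) j - 1) / u (i+1) (j+1) + 1) =
      (u i (j+2) / (u i (j+1) - 1) + 1) *
        ((u i j - 1) / u i (j+1) + 1) := by
  intro i j
  have hupper := liouville_div_sub_one_eq hu i (j+1) (h0 i (j+1)) (h1 (i+1) (j+1))
  have hlower := liouville_sub_one_div_eq hu i j (h0 (i+1) (j+1)) (h1 i (j+1))
  rw [show j + 1 + 1 = j + 2 by ring] at hupper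
  rw [hupper, hlower]
  exact div_sub_one_add_one_mul_comm _ _ _ (h0 i (j+1)) (sub_ne_zero.mpr (h1 i (j+1)))
end

section
/- (The function (phi) is a first-order j-integral of equation (strt).) Let A, B, C, D, δ ∈ ℝ and let v : ℤ × ℤ → ℝ be such that for all i,j ∈ ℤ, writing a = v(i,j), b = v(i+1,j), c = v(i,j+1), d = v(i+1,j+1): b ≠ a, d ≠ c, Ac + δa + C ≠ 0, Ad + δb + C ≠ 0, and (δD − d(Ac + C − δB))/(d − c) = ((a + B)(δb + C) − AD)/(b − a). Then (d(b + B) + D)/(Ad + δb + C) = (c(a + B) + D)/(Ac + δa + C) for all i,j ∈ ℤ; that is, φ(v, v_{0,1}) := (v_{0,1}(v + B) + D)/(A v_{0,1} + δ v + C) is unchanged under the unit shift in i along every solution of (strt). -/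
/-! Cleared of denominators, the equation (strt) on a cell `(a, b, c, d)` is, up to sign, the
equation `φ(b, d) = φ(a, c)` cleared of denominators: the two polynomials of degree two in each
variable coincide identically. -/

namespace Strt

variable {K : Type*} [Field K] (A B C D δ : K)

/-- `φ(v, v_{0,1})`. -/
def phi (v v₀₁ : K) : K :=
  (v₀₁ * (v + B) + D) / (A * v₀₁ + δ * v + C)

theorem strt_cross_sub_eq (a b c d : K) :
    (δ * D - d * (A * c + C - δ * B)) * (b - a) - ((a + B) * (δ * b + C) - A * D) * (d - c) =
      (c * (a + B) + D) * (A * d + δ * b + C) - (d * (b + B) + D) * (A * c + δ * a + C) := by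
  ring

variable {A B C D δ}

theorem phi_eq_of_strt {a b c d : K} (hba : b ≠ a) (hdc : d ≠ c)
    (hac : A * c + δ * a + C ≠ 0) (hbd : A * d + δ * b + C ≠ 0)
    (hstrt : (δ * D - d * (A * c + C - δ * B)) / (d - c) =
      ((a + B) * (δ * b + C) - A * D) / (b - a)) :
    phi A B C D δ b d = phi A B C D δ a c := by
  rw [div_eq_div_iff (sub_ne_zero.mpr hdc) (sub_ne_zero.mpr hba)] at hstrt
  rw [phi, phi, div_eq_div_iff hbd hac]
  linear_combination strt_cross_sub_eq A B C D δ a b c d - hstrt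

end Strt

/-- the function
`φ(v, v_{0,1}) = (v_{0,1}(v + B) + D)/(A v_{0,1} + δ v + C)` is a first-order
`j`-integral of equation (strt), i.e. it is unchanged under the unit shift in `i`
along every solution. -/
theorem phi_is_j_integral_of_strt
    (A B C D δ : ℝ) (v : ℤ → ℤ → ℝ)
    (h : ∀ i j : ℤ,
      v (i+1) j ≠ v i j ∧
      v (i+1) (j+1) ≠ v i (j+1) ∧
      A * v i (j+1) + δ * v i j + C ≠ 0 ∧
      A * v (i+1) (j+1) + δ * v (i+1) j + C ≠ 0 ∧
      (δ * D - v (i+1) (j+1) * (A * v i (j+1) + C - δ * B)) /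
          (v (i+1) (j+1) - v i (j+1)) =
        ((v i j + B) * (δ * v (i+1) j + C) - A * D) / (v (i+1) j - v i j)) :
    ∀ i j : ℤ,
      (v (i+1) (j+1) * (v (i+1) j + B) + D) /
          (A * v (i+1) (j+1) + δ * v (i+1) j + C) =
        (v i (j+1) * (v i j + B) + D) / (A * v i (j+1) + δ * v i j + C) := by
  intro i j
  obtain ⟨hba, hdc, hac, hbd, hstrt⟩ := h i j
  exact Strt.phi_eq_of_strt hba hdc hac hbd hstrt
end

section
/- (Cross-ratio i-integral of equations of the form (veq).) Let α, β, γ : ℝ → ℝ, w : ℤ → ℝ, and v : ℤ × ℤ → ℝ be such that for all i,j ∈ ℤ: γ(w(j)) − v(i,j) ≠ 0, β(w(j)) ≠ 0, and v(i,j+1) = α(w(j)) + β(w(j))/(γ(w(j)) − v(i,j)). Assume moreover that for all i,j the differences v(i+1,j) − v(i,j) and v(i+3,j) − v(i+2,j) are nonzero. Then the cross-ratio I(i,j) := ((v(i+3,j) − v(i+1,j))(v(i+2,j) − v(i,j))) / ((v(i+3,j) − v(i+2,j))(v(i+1,j) − v(i,j))) satisfies I(i,j+1) = I(i,j) for all i,j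 ∈ ℤ. -/
section CrossRatio

variable {K : Type*} [Field K]

def crossRatio (x₀ x₁ x₂ x₃ : K) : K :=
  (x₃ - x₁) * (x₂ - x₀) / ((x₃ - x₂) * (x₁ - x₀))

theorem add_div_sub_sub_add_div_sub (a b c x y : K) (hx : c - x ≠ 0) (hy : c - y ≠ 0) :
    (a + b / (c - x)) - (a + b / (c - y)) = b * (x - y) / ((c - x) * (c - y)) := by
  field_simp
  ring

/-- Each difference picks up the factor `b / ((c - x) (c - y))`; in the cross-ratio every
`c - xₖ` occurs once in the numerator and once in the denominator, and so does `b`. -/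
theorem crossRatio_add_div_sub (a b c : K) {x₀ x₁ x₂ x₃ : K} (hb : b ≠ 0)
    (h₀ : c - x₀ ≠ 0) (h₁ : c - x₁ ≠ 0) (h₂ : c - x₂ ≠ 0) (h₃ : c - x₃ ≠ 0)
    (h₁₀ : x₁ - x₀ ≠ 0) (h₃₂ : x₃ - x₂ ≠ 0) :
    crossRatio (a + b / (c - x₀)) (a + b / (c - x₁)) (a + b / (c - x₂)) (a + b / (c - x₃)) =
      crossRatio x₀ x₁ x₂ x₃ := by
  simp only [crossRatio, add_div_sub_sub_add_div_sub a b c _ _ h₃ h₁,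
    add_div_sub_sub_add_div_sub a b c _ _ h₂ h₀, add_div_sub_sub_add_div_sub a b c _ _ h₃ h₂,
    add_div_sub_sub_add_div_sub a b c _ _ h₁ h₀]
  field_simp

end CrossRatio

/-- the cross-ratio (gin) is an `i`-integral of equations of the
form (veq): if each column step `j → j+1` acts on the row values by the
Möbius-type map `x ↦ α(w) + β(w)/(γ(w) − x)` with `w = w(j)` independent
of `i`, then the cross-ratio of four consecutive row values is unchanged under
the unit shift in `j`. -/
theorem cross_ratio_i_integral
    (α β γ : ℝ → ℝ) (w : ℤ → ℝ) (v : ℤ → ℤ → ℝ)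
    (hden : ∀ i j : ℤ, γ (w j) - v i j ≠ 0)
    (hβ : ∀ i j : ℤ, β (w j) ≠ 0)
    (heq : ∀ i j : ℤ, v i (j+1) = α (w j) + β (w j) / (γ (w j) - v i j))
    (hd1 : ∀ i j : ℤ, v (i+1) j - v i j ≠ 0)
    (hd2 : ∀ i j : ℤ, v (i+3) j - v (i+2) j ≠ 0) :
    ∀ i j : ℤ,
      ((v (i+3) (j+1) - v (i+1) (j+1)) * (v (i+2) (j+1) - v i (j+1))) /
          ((v (i+3) (j+1) - v (i+2) (j+1)) * (v (i+1) (j+1) - v i (j+1))) =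
        ((v (i+3) j - v (i+1) j) * (v (i+2) j - v i j)) /
          ((v (i+3) j - v (i+2) j) * (v (i+1) j - v i j)) := by
  intro i j
  simp only [heq]
  exact crossRatio_add_div_sub (α (w j)) (β (w j)) (γ (w j)) (hβ i j)
    (hden i j) (hden (i+1) j) (hden (i+2) j) (hden (i+3) j) (hd1 i j) (hd2 i j)
end

section
/- (j-integral of equation (ggen), from Proposition 1.) Let A, B, C, D, δ ∈ ℝ with (δ, A, C) ≠ (0,0,0) and (δA, C − δB, D) ≠ (0,0,0). Let u, θ : ℤ × ℤ → ℝ be such that for all i,j ∈ ℤ: (i) P_2 θ(i,j)² + P_1 θ(i,j) + P_0 = 0, where P_2 = δu(i,j) + Au(i,j+1) + AC, P_1 = (C + δB)u(i,j) + (C − δB)u(i,j+1) + (BC − AD − δD)(A − δ) + C², P_0 = (BC − AD)u(i,j) − δD·u(i,j+1) + BC(C − δB) + D(δAB − AC + δ²B); (ii) Aθ(i,j) + u(i,j) + C − δB ≠ 0 and θ(i+1,j)·(Aθ(i,j) + u(i,j) + C − δB) = u(i,j)θ(i,j) + δD; (iii) θ(i+1,j) ≠ θ(i,j), θ(i+1,j+1)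 ≠ θ(i,j+1), and Aθ(i,j+1) + δθ(i,j) + C ≠ 0. Then the function J(i,j) := (θ(i,j+1)(θ(i,j) + B) + D) / (Aθ(i,j+1) + δθ(i,j) + C) satisfies J(i+1,j) = J(i,j) for all i,j ∈ ℤ. -/
/-!
Write `p(θ) = δθ² + (C + δB)θ + BC − AD` (`coeffU`) and `w(θ) = Aθ² + (C − δB)θ − δD`
(`coeffUShift`). The quadratic of (ggen) is linear in `u` and `u_{0,1}`, with these coefficients,
and factors as
`P₂θ² + P₁θ + P₀ = p(θ)(Aθ + u + C − δB) + w(θ)(u_{0,1} − δ(θ + B))`,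
while the shift relation says `(θ_{1,0} − θ)(Aθ + u + C − δB) = −w(θ)`.
With `J = N/M` (`jNum / jDen`), the cross difference
`N(θ_{1,0}, θ_{1,1}) M(θ, θ_{0,1}) − N(θ, θ_{0,1}) M(θ_{1,0}, θ_{1,1})` expands in the increments `a = θ_{1,0} − θ`, `b = θ_{1,1} − θ_{0,1}` as `b p(θ) + a w(θ_{0,1}) + ab M`;
substituting the increments turns it into `−w(θ_{0,1})` times the quadratic, divided by the two
shift denominators, hence zero.
-/

namespace Ggen

variable {K : Type*} [Field K] (A B C D δ : K)

def jNum (x y : K) : K := y * (x + B) + D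

def jDen (x y : K) : K := A * y + δ * x + C

def shiftDen (x v : K) : K := A * x + v + C - δ * B

def quadratic (v v' x : K) : K :=
  (δ * v + A * v' + A * C) * x ^ 2 +
    ((C + δ * B) * v + (C - δ * B) * v' + (B * C - A * D - δ * D) * (A - δ) + C ^ 2) * x +
    ((B * C - A * D) * v - δ * D * v' + B * C * (C - δ * B) + D * (δ * A * B - A * C + δ ^ 2 * B))

def coeffU (x : K) : K := δ * x ^ 2 + (C + δ * B) * x + B * C - A * D

def coeffUShift (x : K) : K := A * x ^ 2 + (C - δ * B) * x - δ * D

theorem quadratic_eq (v v' x : K) :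
    quadratic A B C D δ v v' x =
      coeffU A B C D δ x * shiftDen A B C δ x v + coeffUShift A B C D δ x * (v' - δ * (x + B)) := by
  unfold quadratic coeffU shiftDen coeffUShift
  ring

variable {A B C D δ}

theorem sub_mul_shiftDen {x v x₁ : K} (h : x₁ * shiftDen A B C δ x v = v * x + δ * D) :
    (x₁ - x) * shiftDen A B C δ x v = -coeffUShift A B C D δ x := by
  unfold shiftDen coeffUShift at *
  linear_combination h

theorem jNum_mul_jDen_sub (x y x₁ y₁ : K) :
    jNum B D x₁ y₁ * jDen A C δ x y - jNum B D x y * jDen A C δ x₁ y₁ =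
      (y₁ - y) * coeffU A B C D δ x + (x₁ - x) * coeffUShift A B C D δ y +
        (x₁ - x) * (y₁ - y) * jDen A C δ x y := by
  unfold jNum jDen coeffU coeffUShift
  ring

theorem jNum_mul_jDen_sub_mul_shiftDen {v v' x y x₁ y₁ : K}
    (hx₁ : x₁ * shiftDen A B C δ x v = v * x + δ * D)
    (hy₁ : y₁ * shiftDen A B C δ y v' = v' * y + δ * D) :
    (jNum B D x₁ y₁ * jDen A C δ x y - jNum B D x y * jDen A C δ x₁ y₁) *
        shiftDen A B C δ x v * shiftDen A B C δ y v' =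
      -coeffUShift A B C D δ y * quadratic A B C D δ v v' x := by
  calc _ = ((y₁ - y) * shiftDen A B C δ y v') * coeffU A B C D δ x * shiftDen A B C δ x v +
          ((x₁ - x) * shiftDen A B C δ x v) * coeffUShift A B C D δ y * shiftDen A B C δ y v' +
          ((x₁ - x) * shiftDen A B C δ x v) * ((y₁ - y) * shiftDen A B C δ y v') *
            jDen A C δ x y := by
        rw [jNum_mul_jDen_sub]; ring
    _ = -coeffUShift A B C D δ y * (coeffU A B C D δ x * shiftDen A B C δ x v +
          coeffUShift A B C D δ x * (shiftDen A B C δ y v' - jDen A C δ x y)) := by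
        rw [sub_mul_shiftDen hx₁, sub_mul_shiftDen hy₁]; ring
    _ = _ := by
        rw [quadratic_eq]
        unfold shiftDen jDen
        ring

theorem jNum_div_jDen_eq_of_shift {v v' x y x₁ y₁ : K}
    (hquad : quadratic A B C D δ v v' x = 0)
    (hd : shiftDen A B C δ x v ≠ 0) (hd' : shiftDen A B C δ y v' ≠ 0)
    (hx₁ : x₁ * shiftDen A B C δ x v = v * x + δ * D)
    (hy₁ : y₁ * shiftDen A B C δ y v' = v' * y + δ * D)
    (hJ : jDen A C δ x y ≠ 0) (hJ₁ : jDen A C δ x₁ y₁ ≠ 0) :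
    jNum B D x₁ y₁ / jDen A C δ x₁ y₁ = jNum B D x y / jDen A C δ x y := by
  rw [div_eq_div_iff hJ₁ hJ, ← sub_eq_zero]
  have h := jNum_mul_jDen_sub_mul_shiftDen hx₁ hy₁
  rw [hquad, mul_zero] at h
  simpa [hd, hd'] using h

end Ggen

open Ggen in
theorem ggen_j_integral_general
    (A B C D δ : ℝ)
    (u θ : ℤ → ℤ → ℝ)
    (hquad : ∀ i j : ℤ,
      (δ * u i j + A * u i (j+1) + A * C) * (θ i j) ^ 2 +
        ((C + δ * B) * u i j + (C - δ * B) * u i (j+1) +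
          (B * C - A * D - δ * D) * (A - δ) + C ^ 2) * θ i j +
        ((B * C - A * D) * u i j - δ * D * u i (j+1) +
          B * C * (C - δ * B) + D * (δ * A * B - A * C + δ ^ 2 * B)) = 0)
    (hden : ∀ i j : ℤ, A * θ i j + u i j + C - δ * B ≠ 0)
    (hshift : ∀ i j : ℤ,
      θ (i+1) j * (A * θ i j + u i j + C - δ * B) = u i j * θ i j + δ * D)
    (hJden : ∀ i j : ℤ, A * θ i (j+1) + δ * θ i j + C ≠ 0) :
    ∀ i j : ℤ,
      (θ (i+1) (j+1) * (θ (i+1) j + B) + D) /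
          (A * θ (i+1) (j+1) + δ * θ (i+1) j + C) =
        (θ i (j+1) * (θ i j + B) + D) / (A * θ i (j+1) + δ * θ i j + C) := fun i j =>
  jNum_div_jDen_eq_of_shift (hquad i j) (hden i j) (hden i (j+1)) (hshift i j) (hshift i (j+1))
    (hJden i j) (hJden (i+1) j)

/-- the function
`J = (θ_{0,1}(θ + B) + D)/(Aθ_{0,1} + δθ + C)` is a `j`-integral of equation
(ggen) from Proposition 1. -/
theorem ggen_j_integral
    (A B C D δ : ℝ)
    (h1 : ¬(δ = 0 ∧ A = 0 ∧ C = 0))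
    (h2 : ¬(δ * A = 0 ∧ C - δ * B = 0 ∧ D = 0))
    (u θ : ℤ → ℤ → ℝ)
    (hquad : ∀ i j : ℤ,
      (δ * u i j + A * u i (j+1) + A * C) * (θ i j) ^ 2 +
        ((C + δ * B) * u i j + (C - δ * B) * u i (j+1) +
          (B * C - A * D - δ * D) * (A - δ) + C ^ 2) * θ i j +
        ((B * C - A * D) * u i j - δ * D * u i (j+1) +
          B * C * (C - δ * B) + D * (δ * A * B - A * C + δ ^ 2 * B)) = 0)
    (hden : ∀ i j : ℤ, A * θ i j + u i j + C - δ * B ≠ 0)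
    (hshift : ∀ i j : ℤ,
      θ (i+1) j * (A * θ i j + u i j + C - δ * B) = u i j * θ i j + δ * D)
    (hθ : ∀ i j : ℤ, θ (i+1) j ≠ θ i j)
    (hθ' : ∀ i j : ℤ, θ (i+1) (j+1) ≠ θ i (j+1))
    (hJden : ∀ i j : ℤ, A * θ i (j+1) + δ * θ i j + C ≠ 0) :
    ∀ i j : ℤ,
      (θ (i+1) (j+1) * (θ (i+1) j + B) + D) /
          (A * θ (i+1) (j+1) + δ * θ (i+1) j + C) =
        (θ i (j+1) * (θ i j + B) + D) / (A * θ i (j+1) + δ * θ i j + C) :=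
  ggen_j_integral_general A B C D δ u θ hquad hden hshift hJden
end
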